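/- (Smoothed influence bound) If g : 𝒳^n → 𝒵 satisfies Pr_{X∼μ^{⊗n}}[f(X) ≠ g(X)] ≤ δ, then D^{μ^{⊗n}}_ε(f) ≥ (1 − max_{z∈𝒵} Pr[g(X) = z] − ε − δ) / Inf_max(g, μ). -/

import Mathlib

open MeasureTheory Function
open scoped ENNReal


inductive DTree (X Z : Type) (n : ℕ) : Type where
  | leaf (z : Z) : DTree X Z n
  | node (i : Fin n) (children : X → DTree X Z n) : DTree X Z n

def DTree.eval {X Z : Type} {n : ℕ} : DTree X Z n → (Fin n → X) → Z
  | .leaf z, _ => z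
  | .node i c, x => (c (x i)).eval x

def DTree.depth {X Z : Type} {n : ℕ} [Fintype X] : DTree X Z n → ℕ
  | .leaf _ => 0
  | .node _ c => 1 + Finset.univ.sup fun a => (c a).depth

set_option linter.unusedSectionVars false
set_option maxHeartbeats 1000000

section Atoms

variable {𝒳 : Type} [Fintype 𝒳] [MeasurableSpace 𝒳]

/-- The measurable atom of a point: intersection of all measurable sets containing it. -/
def mAtom (a : 𝒳) : Set 𝒳 := ⋂₀ {S : Set 𝒳 | MeasurableSet S ∧ a ∈ S}

lemma mem_mAtom_self (a : 𝒳) : a ∈ mAtom a := fun _ hS => hS.2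

lemma measurableSet_mAtom (a : 𝒳) : MeasurableSet (mAtom a) :=
  MeasurableSet.sInter ((Set.toFinite _).countable) (fun _ hS => hS.1)

lemma mem_mAtom_iff {a b : 𝒳} :
    b ∈ mAtom a ↔ ∀ S : Set 𝒳, MeasurableSet S → (a ∈ S ↔ b ∈ S) := by
  constructor
  · intro h S hS
    constructor
    · intro ha; exact h S ⟨hS, ha⟩
    · intro hb; by_contra ha
      exact (h Sᶜ ⟨hS.compl, ha⟩) hb
  · intro h S hS; exact (h S hS.1).1 hS.2

lemma mAtom_eq_of_mem {a b : 𝒳} (h : b ∈ mAtom a) : mAtom b = mAtom a := by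
  have h' := mem_mAtom_iff.1 h
  have hset : {S : Set 𝒳 | MeasurableSet S ∧ b ∈ S} = {S : Set 𝒳 | MeasurableSet S ∧ a ∈ S} := by
    ext S
    simp only [Set.mem_setOf_eq]
    constructor
    · rintro ⟨hS, hb⟩; exact ⟨hS, (h' S hS).2 hb⟩
    · rintro ⟨hS, ha⟩; exact ⟨hS, (h' S hS).1 ha⟩
  unfold mAtom
  rw [hset]

/-- A canonical representative of the measurable atom of `a`. -/
noncomputable def rep (a : 𝒳) : 𝒳 := @Classical.epsilon _ ⟨a⟩ (· ∈ mAtom a)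

lemma rep_mem (a : 𝒳) : rep a ∈ mAtom a :=
  Classical.epsilon_spec (⟨a, mem_mAtom_self a⟩ : ∃ b, b ∈ mAtom a)

lemma rep_eq_of_mem {a b : 𝒳} (h : b ∈ mAtom a) : rep b = rep a := by
  unfold rep
  simp only [mAtom_eq_of_mem h]

lemma rep_idem (a : 𝒳) : rep (rep a) = rep a := rep_eq_of_mem (rep_mem a)

lemma rep_mem_iff {S : Set 𝒳} (hS : MeasurableSet S) {a : 𝒳} : rep a ∈ S ↔ a ∈ S :=
  (mem_mAtom_iff.1 (rep_mem a) S hS).symm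

lemma rep_preimage_eq {S : Set 𝒳} (hS : MeasurableSet S) : rep ⁻¹' S = S :=
  Set.ext fun _ => rep_mem_iff hS

lemma measurableSet_rep_preimage (T : Set 𝒳) : MeasurableSet (rep ⁻¹' T) := by
  have : rep ⁻¹' T = ⋃ (a : 𝒳) (_ : rep a ∈ T), mAtom a := by
    ext b
    simp only [Set.mem_preimage, Set.mem_iUnion]
    constructor
    · intro hb; exact ⟨b, hb, mem_mAtom_self b⟩
    · rintro ⟨a, ha, hb⟩; rwa [rep_eq_of_mem hb]
  rw [this]
  exact MeasurableSet.iUnion fun a => MeasurableSet.iUnion fun _ => measurableSet_mAtom a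

end Atoms

section Fixed

/-- The σ-algebra of sets fixed (as preimages) by `F`. -/
def fixedSets {α : Type*} (F : α → α) : MeasurableSpace α where
  MeasurableSet' s := F ⁻¹' s = s
  measurableSet_empty := by simp
  measurableSet_compl := fun s hs => by
    show F ⁻¹' sᶜ = sᶜ
    rw [Set.preimage_compl]; rw [show F ⁻¹' s = s from hs]
  measurableSet_iUnion := fun f hf => by
    show F ⁻¹' (⋃ i, f i) = ⋃ i, f i
    rw [Set.preimage_iUnion]; exact Set.iUnion_congr hf

lemma measure_preimage_le {α : Type*} [MeasurableSpace α] (ν : Measure α) (F : α → α)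
    (h : ∀ s : Set α, MeasurableSet s → F ⁻¹' s = s) (A : Set α) :
    ν (F ⁻¹' A) ≤ ν A := by
  calc ν (F ⁻¹' A) ≤ ν (F ⁻¹' (toMeasurable ν A)) :=
        measure_mono (Set.preimage_mono (subset_toMeasurable ν A))
    _ = ν (toMeasurable ν A) := by rw [h _ (measurableSet_toMeasurable ν A)]
    _ = ν A := measure_toMeasurable A

variable {𝒳 : Type} [Fintype 𝒳] [MeasurableSpace 𝒳] {n : ℕ}

/-- Coordinatewise representative map. -/
noncomputable def Rmap (x : Fin n → 𝒳) : Fin n → 𝒳 := fun i => rep (x i)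

lemma Rmap_fixed : ∀ s : Set (Fin n → 𝒳), MeasurableSet s → Rmap ⁻¹' s = s := by
  have hle : (MeasurableSpace.pi : MeasurableSpace (Fin n → 𝒳)) ≤ fixedSets Rmap := by
    refine iSup_le fun i => ?_
    rintro s ⟨A, hA, rfl⟩
    show Rmap ⁻¹' ((fun x => x i) ⁻¹' A) = _
    have : Rmap ⁻¹' ((fun x : Fin n → 𝒳 => x i) ⁻¹' A)
        = (fun x : Fin n → 𝒳 => x i) ⁻¹' (rep ⁻¹' A) := rfl
    rw [this, rep_preimage_eq hA]
  exact fun s hs => hle s hs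

lemma prodRep_fixed :
    ∀ s : Set ((Fin n → 𝒳) × 𝒳), MeasurableSet s →
      (fun p : (Fin n → 𝒳) × 𝒳 => (Rmap p.1, rep p.2)) ⁻¹' s = s := by
  have hle : (inferInstance : MeasurableSpace ((Fin n → 𝒳) × 𝒳))
      ≤ fixedSets (fun p : (Fin n → 𝒳) × 𝒳 => (Rmap p.1, rep p.2)) := by
    refine sup_le ?_ ?_
    · rintro s ⟨A, hA, rfl⟩
      show (fun p : (Fin n → 𝒳) × 𝒳 => (Rmap p.1, rep p.2)) ⁻¹' (Prod.fst ⁻¹' A) = _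
      have : (fun p : (Fin n → 𝒳) × 𝒳 => (Rmap p.1, rep p.2)) ⁻¹' (Prod.fst ⁻¹' A)
          = Prod.fst ⁻¹' (Rmap ⁻¹' A) := rfl
      rw [this, Rmap_fixed A hA]
    · rintro s ⟨A, hA, rfl⟩
      show (fun p : (Fin n → 𝒳) × 𝒳 => (Rmap p.1, rep p.2)) ⁻¹' (Prod.snd ⁻¹' A) = _
      have : (fun p : (Fin n → 𝒳) × 𝒳 => (Rmap p.1, rep p.2)) ⁻¹' (Prod.snd ⁻¹' A)
          = Prod.snd ⁻¹' (rep ⁻¹' A) := rfl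
      rw [this, rep_preimage_eq hA]
  exact fun s hs => hle s hs

lemma measurableSet_Rmap_preimage (A : Set (Fin n → 𝒳)) : MeasurableSet (Rmap ⁻¹' A) := by
  classical
  have : Rmap ⁻¹' A = ⋃ y ∈ A, ⋂ i, (fun x : Fin n → 𝒳 => x i) ⁻¹' (rep ⁻¹' {y i}) := by
    ext x
    simp only [Set.mem_preimage, Set.mem_iUnion, Set.mem_iInter, Set.mem_singleton_iff]
    constructor
    · intro hx; exact ⟨Rmap x, hx, fun i => rfl⟩
    · rintro ⟨y, hy, h⟩
      have : Rmap x = y := funext fun i => h i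
      rwa [this]
  rw [this]
  exact MeasurableSet.biUnion (Set.toFinite A).countable fun y _ =>
    MeasurableSet.iInter fun i =>
      (measurable_pi_apply i) (measurableSet_rep_preimage {y i})

end Fixed

section Trees

variable {𝒳 𝒵 : Type} [Fintype 𝒳] [MeasurableSpace 𝒳] {n : ℕ}

/-- Replace every queried value by its atom representative before branching. -/
noncomputable def DTree.bar : DTree 𝒳 𝒵 n → DTree 𝒳 𝒵 n
  | .leaf z => .leaf z
  | .node i c => .node i (fun b => (c (rep b)).bar)

/-- The tree never queries a coordinate in `E`, nor repeats a query. -/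
def DTree.Avoid : DTree 𝒳 𝒵 n → Set (Fin n) → Prop
  | .leaf _, _ => True
  | .node i c, E => i ∉ E ∧ ∀ b, (c b).Avoid (insert i E)

/-- Branching only depends on atom representatives. -/
def DTree.IsBar : DTree 𝒳 𝒵 n → Prop
  | .leaf _ => True
  | .node _ c => (∀ b, c b = c (rep b)) ∧ ∀ b, (c b).IsBar

/-- Simplification of a tree with respect to a partial assignment: never re-query
a coordinate whose value is already known. -/
def DTree.prune : DTree 𝒳 𝒵 n → (Fin n → Option 𝒳) → DTree 𝒳 𝒵 n
  | .leaf z, _ => .leaf z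
  | .node i c, σ =>
    match σ i with
    | some a => (c a).prune σ
    | none => .node i (fun b => (c b).prune (Function.update σ i (some b)))

lemma DTree.bar_eval (T : DTree 𝒳 𝒵 n) (x : Fin n → 𝒳) :
    T.bar.eval x = T.eval (Rmap x) := by
  induction T with
  | leaf z => rfl
  | node i c ih =>
      show ((c (rep (x i))).bar).eval x = (c (Rmap x i)).eval (Rmap x)
      exact ih (rep (x i))

lemma DTree.bar_depth (T : DTree 𝒳 𝒵 n) : T.bar.depth ≤ T.depth := by
  induction T with
  | leaf z => exact le_refl _
  | node i c ih =>
      show 1 + Finset.univ.sup (fun b => ((c (rep b)).bar).depth)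
          ≤ 1 + Finset.univ.sup (fun b => (c b).depth)
      refine add_le_add_right (Finset.sup_le fun b _ => ?_) 1
      exact (ih (rep b)).trans (Finset.le_sup (f := fun b => (c b).depth) (Finset.mem_univ (rep b)))

lemma DTree.bar_isBar (T : DTree 𝒳 𝒵 n) : T.bar.IsBar := by
  induction T with
  | leaf z => trivial
  | node i c ih =>
      refine ⟨fun b => ?_, fun b => ih (rep b)⟩
      show ((c (rep b)).bar) = ((c (rep (rep b))).bar)
      rw [rep_idem]

lemma DTree.bar_avoid {T : DTree 𝒳 𝒵 n} {E : Set (Fin n)} (h : T.Avoid E) :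
    T.bar.Avoid E := by
  induction T generalizing E with
  | leaf z => trivial
  | node i c ih => exact ⟨h.1, fun b => ih (rep b) (h.2 (rep b))⟩

lemma DTree.prune_eval (T : DTree 𝒳 𝒵 n) (σ : Fin n → Option 𝒳) (x : Fin n → 𝒳)
    (hcompat : ∀ j a, σ j = some a → x j = a) :
    (T.prune σ).eval x = T.eval x := by
  induction T generalizing σ with
  | leaf z => rfl
  | node i c ih =>
      show (DTree.prune _ σ).eval x = (c (x i)).eval x
      cases hσ : σ i with
      | some a =>
          have hxa : x i = a := hcompat i a hσ
          simp only [DTree.prune, hσ]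
          rw [ih a σ hcompat, hxa]
      | none =>
          simp only [DTree.prune, hσ]
          show ((c (x i)).prune (Function.update σ i (some (x i)))).eval x = (c (x i)).eval x
          refine ih (x i) _ fun j a hj => ?_
          by_cases hji : j = i
          · subst hji
            rw [Function.update_self] at hj
            exact Option.some_inj.1 hj
          · rw [Function.update_of_ne hji] at hj
            exact hcompat j a hj

lemma DTree.prune_depth (T : DTree 𝒳 𝒵 n) (σ : Fin n → Option 𝒳) :
    (T.prune σ).depth ≤ T.depth := by
  induction T generalizing σ with
  | leaf z => exact le_refl _
  | node i c ih =>
      cases hσ : σ i with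
      | some a =>
          simp only [DTree.prune, hσ]
          calc ((c a).prune σ).depth ≤ (c a).depth := ih a σ
            _ ≤ Finset.univ.sup (fun b => (c b).depth) := Finset.le_sup (f := fun b => (c b).depth) (Finset.mem_univ a)
            _ ≤ 1 + Finset.univ.sup (fun b => (c b).depth) := Nat.le_add_left _ _
      | none =>
          simp only [DTree.prune, hσ]
          show 1 + Finset.univ.sup (fun b => ((c b).prune _).depth) ≤ _
          refine add_le_add_right (Finset.sup_le fun b _ => ?_) 1
          exact (ih b _).trans (Finset.le_sup (f := fun b => (c b).depth) (Finset.mem_univ b))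

lemma DTree.prune_avoid (T : DTree 𝒳 𝒵 n) (σ : Fin n → Option 𝒳) :
    (T.prune σ).Avoid {j | σ j ≠ none} := by
  induction T generalizing σ with
  | leaf z => trivial
  | node i c ih =>
      cases hσ : σ i with
      | some a =>
          simp only [DTree.prune, hσ]
          exact ih a σ
      | none =>
          simp only [DTree.prune, hσ]
          refine ⟨by simp [hσ], fun b => ?_⟩
          have hset : {j | Function.update σ i (some b) j ≠ none}
              = insert i {j | σ j ≠ none} := by
            ext j
            by_cases hji : j = i
            · subst hji; simp [Function.update_self]
            · simp [Function.update_of_ne hji, hji]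
          have := ih b (Function.update σ i (some b))
          rwa [hset] at this

lemma DTree.avoid_eval_eq {T : DTree 𝒳 𝒵 n} {E : Set (Fin n)} (h : T.Avoid E)
    {x y : Fin n → 𝒳} (hxy : ∀ j, j ∉ E → x j = y j) : T.eval x = T.eval y := by
  induction T generalizing E with
  | leaf z => rfl
  | node i c ih =>
      have hxi : x i = y i := hxy i h.1
      show (c (x i)).eval x = (c (y i)).eval y
      rw [hxi]
      exact ih (y i) (h.2 (y i)) fun j hj => hxy j (fun hjE => hj (Set.mem_insert_of_mem i hjE))

lemma DTree.isBar_eval_measurable {T : DTree 𝒳 𝒵 n} (h : T.IsBar) (z : 𝒵) :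
    MeasurableSet {x : Fin n → 𝒳 | T.eval x = z} := by
  induction T with
  | leaf w =>
      by_cases hw : w = z
      · have : {x : Fin n → 𝒳 | (DTree.leaf w : DTree 𝒳 𝒵 n).eval x = z} = Set.univ := by
          ext x; simp [DTree.eval, hw]
        rw [this]; exact MeasurableSet.univ
      · have : {x : Fin n → 𝒳 | (DTree.leaf w : DTree 𝒳 𝒵 n).eval x = z} = ∅ := by
          ext x; simp [DTree.eval, hw]
        rw [this]; exact MeasurableSet.empty
  | node i c ih =>
      have hset : {x : Fin n → 𝒳 | (DTree.node i c).eval x = z}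
          = ⋃ (a : 𝒳), ((fun x : Fin n → 𝒳 => x i) ⁻¹' (rep ⁻¹' {a})
              ∩ {x : Fin n → 𝒳 | (c a).eval x = z}) := by
        ext x
        simp only [Set.mem_iUnion, Set.mem_inter_iff, Set.mem_preimage, Set.mem_singleton_iff,
          Set.mem_setOf_eq]
        constructor
        · intro hx
          refine ⟨rep (x i), rfl, ?_⟩
          rwa [← h.1 (x i)]
        · rintro ⟨a, ha, hx⟩
          show (c (x i)).eval x = z
          rw [h.1 (x i), ha]
          exact hx
      rw [hset]
      exact MeasurableSet.iUnion fun a =>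
        ((measurable_pi_apply i) (measurableSet_rep_preimage {a})).inter (ih a (h.2 a))

/-- The full tree querying the coordinates in `L`. -/
def allTree (f : (Fin n → 𝒳) → 𝒵) : List (Fin n) → (Fin n → 𝒳) → DTree 𝒳 𝒵 n
  | [], σ => .leaf (f σ)
  | i :: L, σ => .node i (fun a => allTree f L (Function.update σ i a))

lemma allTree_eval (f : (Fin n → 𝒳) → 𝒵) (L : List (Fin n)) (σ x : Fin n → 𝒳) :
    (allTree f L σ).eval x = f (fun j => if j ∈ L then x j else σ j) := by
  induction L generalizing σ with
  | nil => simp [allTree, DTree.eval]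
  | cons i L ih =>
      show (allTree f L (Function.update σ i (x i))).eval x = _
      rw [ih]
      congr 1
      funext j
      by_cases hjL : j ∈ L
      · simp [hjL]
      · by_cases hji : j = i
        · subst hji; simp [hjL, Function.update_self]
        · simp [hjL, hji, Function.update_of_ne hji]

lemma allTree_depth (f : (Fin n → 𝒳) → 𝒵) (L : List (Fin n)) (σ : Fin n → 𝒳) :
    (allTree f L σ).depth ≤ L.length := by
  induction L generalizing σ with
  | nil => exact le_refl _
  | cons i L ih =>
      show 1 + Finset.univ.sup (fun a => (allTree f L (Function.update σ i a)).depth)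
          ≤ L.length + 1
      rw [Nat.add_comm 1 (Finset.univ.sup fun a => (allTree f L (Function.update σ i a)).depth)]
      exact add_le_add_left (Finset.sup_le fun a _ => ih (Function.update σ i a)) 1

end Trees

section Swap

lemma lmarginal_const_mul' {δ : Type*} [DecidableEq δ] {π : δ → Type*}
    [∀ i, MeasurableSpace (π i)]
    (μs : ∀ i, Measure (π i)) (s : Finset δ) (c : ℝ≥0∞) {f : (∀ i, π i) → ℝ≥0∞}
    (hf : Measurable f) (x : ∀ i, π i) :
    (∫⋯∫⁻_s, (fun y => c * f y) ∂μs) x = c * (∫⋯∫⁻_s, f ∂μs) x := by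
  unfold MeasureTheory.lmarginal
  exact lintegral_const_mul c (hf.comp measurable_updateFinset)

variable {𝒳 : Type} [Fintype 𝒳] [MeasurableSpace 𝒳] [Nonempty 𝒳] {n : ℕ}
variable (μ : Measure 𝒳) [IsProbabilityMeasure μ]

theorem swap_map (i : Fin n) :
    Measure.map (fun p : (Fin n → 𝒳) × 𝒳 => (Function.update p.1 i p.2, p.1 i))
      ((Measure.pi fun _ : Fin n => μ).prod μ) = (Measure.pi fun _ : Fin n => μ).prod μ := by
  classical
  set ρ : Measure (Fin n → 𝒳) := Measure.pi fun _ : Fin n => μ with hρ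
  have hφ : Measurable (fun p : (Fin n → 𝒳) × 𝒳 => (Function.update p.1 i p.2, p.1 i)) :=
    measurable_update'.prodMk ((measurable_pi_apply i).comp measurable_fst)
  refine (Measure.prod_eq fun s t hs ht => ?_).symm
  set x₀ : Fin n → 𝒳 := Classical.arbitrary _ with hx₀
  set G : (Fin n → 𝒳) → ℝ≥0∞ :=
    ∫⋯∫⁻_{i}, (Set.indicator s 1) ∂(fun _ : Fin n => μ) with hGdef
  have hGmeas : Measurable G := Measurable.lmarginal _ (measurable_one.indicator hs)
  have hGval : ∀ x, G x = μ {b | Function.update x i b ∈ s} := by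
    intro x
    rw [hGdef, lmarginal_singleton]
    have hind : ∀ a : 𝒳, Set.indicator s (1 : (Fin n → 𝒳) → ℝ≥0∞) (Function.update x i a)
        = Set.indicator {b : 𝒳 | Function.update x i b ∈ s} (1 : 𝒳 → ℝ≥0∞) a := by
      intro a
      by_cases ha : Function.update x i a ∈ s
      · simp only [Set.indicator_of_mem ha,
          Set.indicator_of_mem (show a ∈ {b : 𝒳 | Function.update x i b ∈ s} from ha),
          Pi.one_apply]
      · simp only [Set.indicator_of_notMem ha,
          Set.indicator_of_notMem (show a ∉ {b : 𝒳 | Function.update x i b ∈ s} from ha)]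
    simp_rw [hind]
    exact lintegral_indicator_one (hs.preimage (measurable_update x))
  have hGupdate : ∀ x a, G (Function.update x i a) = G x := by
    intro x a
    rw [hGval, hGval]
    congr 1
    ext b
    simp [Function.update_idem]
  rw [Measure.map_apply hφ (hs.prod ht)]
  have hprme : MeasurableSet ((fun p : (Fin n → 𝒳) × 𝒳 =>
      (Function.update p.1 i p.2, p.1 i)) ⁻¹' (s ×ˢ t)) := hφ (hs.prod ht)
  rw [Measure.prod_apply hprme]
  have hsec : ∀ x : Fin n → 𝒳,
      μ (Prod.mk x ⁻¹' ((fun p : (Fin n → 𝒳) × 𝒳 =>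
        (Function.update p.1 i p.2, p.1 i)) ⁻¹' (s ×ˢ t)))
      = Set.indicator t 1 (x i) * G x := by
    intro x
    have hset : (Prod.mk x ⁻¹' ((fun p : (Fin n → 𝒳) × 𝒳 =>
        (Function.update p.1 i p.2, p.1 i)) ⁻¹' (s ×ˢ t)))
        = {b : 𝒳 | Function.update x i b ∈ s ∧ x i ∈ t} := rfl
    rw [hset]
    by_cases hx : x i ∈ t
    · rw [Set.indicator_of_mem hx, Pi.one_apply, one_mul, hGval]
      congr 1
      ext b
      simp [hx]
    · rw [Set.indicator_of_notMem hx, zero_mul]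
      have : {b : 𝒳 | Function.update x i b ∈ s ∧ x i ∈ t} = ∅ := by
        ext b; simp [hx]
      rw [this, measure_empty]
  rw [lintegral_congr hsec]
  have hF1meas : Measurable (fun x : Fin n → 𝒳 => Set.indicator t 1 (x i) * G x) :=
    ((measurable_one.indicator ht).comp (measurable_pi_apply i)).mul hGmeas
  rw [lintegral_eq_lmarginal_univ (μ := fun _ : Fin n => μ) x₀,
    lmarginal_erase' _ hF1meas (Finset.mem_univ i)]
  have hinner : (fun x : Fin n → 𝒳 => ∫⁻ a,
        Set.indicator t 1 ((Function.update x i a) i) * G (Function.update x i a) ∂μ)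
      = fun x => μ t * G x := by
    funext x
    have hpt : ∀ a : 𝒳, Set.indicator t 1 ((Function.update x i a) i)
        * G (Function.update x i a) = Set.indicator t (fun _ => G x) a := by
      intro a
      rw [Function.update_self, hGupdate]
      by_cases ha : a ∈ t
      · rw [Set.indicator_of_mem ha, Set.indicator_of_mem ha, Pi.one_apply, one_mul]
      · rw [Set.indicator_of_notMem ha, Set.indicator_of_notMem ha, zero_mul]
    simp_rw [hpt]
    rw [lintegral_indicator_const ht, mul_comm]
  rw [hinner, lmarginal_const_mul' _ _ _ hGmeas]
  have hρs : ρ s = (∫⋯∫⁻_(Finset.univ.erase i), G ∂(fun _ : Fin n => μ)) x₀ := by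
    rw [← lintegral_indicator_one (μ := ρ) hs,
      lintegral_eq_lmarginal_univ (μ := fun _ : Fin n => μ) x₀,
      lmarginal_erase' _ (measurable_one.indicator hs) (Finset.mem_univ i)]
    congr 1
    rw [hGdef, lmarginal_singleton]
  rw [← hρs, mul_comm]

end Swap

section MainBound

variable {𝒳 𝒵 : Type} [Fintype 𝒳] [Fintype 𝒵] [MeasurableSpace 𝒳] [Nonempty 𝒳] {n : ℕ}

lemma rep_fibers_sum (μ : Measure 𝒳) [IsProbabilityMeasure μ] :
    ∑ a : 𝒳, μ (rep ⁻¹' {a}) = 1 := by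
  classical
  have hdisj : Pairwise (Function.onFun Disjoint (fun a : 𝒳 => rep ⁻¹' {a})) := by
    intro a a' haa'
    rw [Function.onFun, Set.disjoint_left]
    intro b hb hb'
    exact haa' (hb.symm.trans hb')
  have hcover : (⋃ a : 𝒳, rep ⁻¹' {a}) = Set.univ := by
    ext b
    simp only [Set.mem_iUnion, Set.mem_preimage, Set.mem_singleton_iff, Set.mem_univ, iff_true]
    exact ⟨rep b, rfl⟩
  rw [← tsum_fintype (L := SummationFilter.unconditional _), ← measure_iUnion hdisj (fun a => measurableSet_rep_preimage {a}),
    hcover, measure_univ]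

lemma main_bound (μ : Measure 𝒳) [IsProbabilityMeasure μ]
    (g' : (Fin n → 𝒳) → 𝒵) (hg' : ∀ z : 𝒵, MeasurableSet {x : Fin n → 𝒳 | g' x = z})
    (T : DTree 𝒳 𝒵 n) (hbar : T.IsBar) (E : Set (Fin n)) (hav : T.Avoid E) :
    (Measure.pi fun _ : Fin n => μ) {x | g' x = T.eval x}
      ≤ (⨆ z : 𝒵, (Measure.pi fun _ : Fin n => μ) {x | g' x = z})
        + T.depth * ⨆ j : Fin n, ((Measure.pi fun _ : Fin n => μ).prod μ)
            {p | g' p.1 ≠ g' (Function.update p.1 j p.2)} := by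
  classical
  induction T generalizing E with
  | leaf z =>
      refine le_trans ?_ le_self_add
      exact le_iSup (fun z : 𝒵 => (Measure.pi fun _ : Fin n => μ) {x | g' x = z}) z
  | node i c ih =>
      set ρ : Measure (Fin n → 𝒳) := Measure.pi fun _ : Fin n => μ with hρdef
      set m : Measure ((Fin n → 𝒳) × 𝒳) := ρ.prod μ with hmdef
      set I : ℝ≥0∞ := ⨆ j : Fin n, m {p | g' p.1 ≠ g' (Function.update p.1 j p.2)} with hIdef
      set sz : ℝ≥0∞ := ⨆ z : 𝒵, ρ {x | g' x = z} with hszdef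
      obtain ⟨hc_fact, hc_bar⟩ := hbar
      obtain ⟨hiE, hc_av⟩ := hav
      set d : ℕ := Finset.univ.sup (fun a : 𝒳 => (c a).depth) with hddef
      have hφ : Measurable (fun p : (Fin n → 𝒳) × 𝒳 => (Function.update p.1 i p.2, p.1 i)) :=
        measurable_update'.prodMk ((measurable_pi_apply i).comp measurable_fst)
      have hSa : ∀ a : 𝒳, MeasurableSet {x : Fin n → 𝒳 | g' x = (c a).eval x} := by
        intro a
        have : {x : Fin n → 𝒳 | g' x = (c a).eval x}
            = ⋃ z : 𝒵, ({x | g' x = z} ∩ {x | (c a).eval x = z}) := by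
          ext x
          simp only [Set.mem_setOf_eq, Set.mem_iUnion, Set.mem_inter_iff]
          constructor
          · intro hx; exact ⟨g' x, rfl, hx.symm⟩
          · rintro ⟨z, h1, h2⟩; rw [h1, h2]
        rw [this]
        exact MeasurableSet.iUnion fun z =>
          (hg' z).inter (DTree.isBar_eval_measurable (hc_bar a) z)
      set B : Set ((Fin n → 𝒳) × 𝒳) :=
        ⋃ a : 𝒳, ({x : Fin n → 𝒳 | g' x = (c a).eval x} ×ˢ (rep ⁻¹' {a})) with hBdef
      have hB : MeasurableSet B :=
        MeasurableSet.iUnion fun a => (hSa a).prod (measurableSet_rep_preimage {a})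
      have h1 : ρ {x | g' x = (DTree.node i c).eval x}
          = m ({x | g' x = (DTree.node i c).eval x} ×ˢ (Set.univ : Set 𝒳)) := by
        rw [hmdef, Measure.prod_prod, measure_univ, mul_one]
      have hsub : ({x | g' x = (DTree.node i c).eval x} ×ˢ (Set.univ : Set 𝒳))
          ⊆ {p : (Fin n → 𝒳) × 𝒳 | g' p.1 ≠ g' (Function.update p.1 i p.2)}
            ∪ {p : (Fin n → 𝒳) × 𝒳 |
                g' (Function.update p.1 i p.2) = (DTree.node i c).eval p.1} := by
        rintro ⟨x, b⟩ ⟨hx, -⟩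
        by_cases hb : g' (Function.update x i b) = g' x
        · right
          show g' (Function.update x i b) = (DTree.node i c).eval x
          rw [hb]; exact hx
        · left
          exact fun hcon => hb hcon.symm
      have hGood : {p : (Fin n → 𝒳) × 𝒳 |
            g' (Function.update p.1 i p.2) = (DTree.node i c).eval p.1}
          = (fun p : (Fin n → 𝒳) × 𝒳 => (Function.update p.1 i p.2, p.1 i)) ⁻¹' B := by
        ext ⟨x, b⟩
        have hagree : ∀ a : 𝒳, (c a).Avoid (insert i E) →
            (c a).eval (Function.update x i b) = (c a).eval x := by
          intro a hAv
          refine DTree.avoid_eval_eq hAv fun j hj => ?_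
          have hji : j ≠ i := fun h => hj (h ▸ Set.mem_insert i E)
          exact Function.update_of_ne hji b x
        simp only [Set.mem_setOf_eq, Set.mem_preimage, hBdef, Set.mem_iUnion, Set.mem_prod,
          Set.mem_singleton_iff]
        constructor
        · intro hx
          refine ⟨rep (x i), ?_, rfl⟩
          show g' (Function.update x i b) = (c (rep (x i))).eval (Function.update x i b)
          rw [← hc_fact (x i), hagree (x i) (hc_av (x i)), hx]
          rfl
        · rintro ⟨a, ⟨ha, hrep⟩⟩
          show g' (Function.update x i b) = (c (x i)).eval x
          rw [hc_fact (x i), hrep, ← hagree a (by rw [← hrep, ← hc_fact (x i)]; exact hc_av (x i))]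
          exact ha
      have hGoodle : m {p : (Fin n → 𝒳) × 𝒳 |
            g' (Function.update p.1 i p.2) = (DTree.node i c).eval p.1}
          ≤ sz + (d : ℝ≥0∞) * I := by
        rw [hGood, ← Measure.map_apply hφ hB, hmdef, swap_map μ i]
        have hdisj : Pairwise (Function.onFun Disjoint
            (fun a : 𝒳 => ({x : Fin n → 𝒳 | g' x = (c a).eval x} ×ˢ (rep ⁻¹' {a})))) := by
          intro a a' haa'
          rw [Function.onFun, Set.disjoint_left]
          rintro ⟨x, b⟩ ⟨-, hb⟩ ⟨-, hb'⟩
          exact haa' ((Set.mem_singleton_iff.1 hb).symm.trans (Set.mem_singleton_iff.1 hb'))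
        rw [hBdef, measure_iUnion hdisj
          (fun a => (hSa a).prod (measurableSet_rep_preimage {a})), tsum_fintype]
        have hbound : ∀ a : 𝒳, (ρ.prod μ) ({x : Fin n → 𝒳 | g' x = (c a).eval x}
            ×ˢ (rep ⁻¹' {a})) ≤ (sz + (d : ℝ≥0∞) * I) * μ (rep ⁻¹' {a}) := by
          intro a
          rw [Measure.prod_prod]
          refine mul_le_mul_left ?_ _
          refine (ih a (hc_bar a) (insert i E) (hc_av a)).trans ?_
          refine add_le_add_right (mul_le_mul_left ?_ I) sz
          exact_mod_cast Nat.cast_le.2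
            (Finset.le_sup (f := fun a : 𝒳 => (c a).depth) (Finset.mem_univ a))
        calc ∑ a : 𝒳, (ρ.prod μ) ({x : Fin n → 𝒳 | g' x = (c a).eval x} ×ˢ (rep ⁻¹' {a}))
            ≤ ∑ a : 𝒳, (sz + (d : ℝ≥0∞) * I) * μ (rep ⁻¹' {a}) :=
              Finset.sum_le_sum fun a _ => hbound a
          _ = (sz + (d : ℝ≥0∞) * I) * ∑ a : 𝒳, μ (rep ⁻¹' {a}) := by rw [Finset.mul_sum]
          _ = sz + (d : ℝ≥0∞) * I := by rw [rep_fibers_sum μ, mul_one]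
      have hBadle : m {p : (Fin n → 𝒳) × 𝒳 | g' p.1 ≠ g' (Function.update p.1 i p.2)} ≤ I :=
        le_iSup (fun j : Fin n => m {p : (Fin n → 𝒳) × 𝒳 |
          g' p.1 ≠ g' (Function.update p.1 j p.2)}) i
      have hdepth : ((DTree.node i c).depth : ℝ≥0∞) = 1 + (d : ℝ≥0∞) := by
        show ((1 + d : ℕ) : ℝ≥0∞) = 1 + (d : ℝ≥0∞)
        push_cast
        ring
      calc ρ {x | g' x = (DTree.node i c).eval x}
          = m ({x | g' x = (DTree.node i c).eval x} ×ˢ (Set.univ : Set 𝒳)) := h1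
        _ ≤ m ({p : (Fin n → 𝒳) × 𝒳 | g' p.1 ≠ g' (Function.update p.1 i p.2)}
            ∪ {p : (Fin n → 𝒳) × 𝒳 |
                g' (Function.update p.1 i p.2) = (DTree.node i c).eval p.1}) :=
          measure_mono hsub
        _ ≤ m {p : (Fin n → 𝒳) × 𝒳 | g' p.1 ≠ g' (Function.update p.1 i p.2)}
            + m {p : (Fin n → 𝒳) × 𝒳 |
                g' (Function.update p.1 i p.2) = (DTree.node i c).eval p.1} :=
          measure_union_le _ _
        _ ≤ I + (sz + (d : ℝ≥0∞) * I) := add_le_add hBadle hGoodle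
        _ = sz + (1 + (d : ℝ≥0∞)) * I := by ring
        _ = sz + ((DTree.node i c).depth : ℝ≥0∞) * I := by rw [hdepth]

end MainBound

/-- Smoothed influence bound: if Pr[f ≠ g] ≤ δ then
D_ε(f) ≥ (1 − max_z Pr[g(X)=z] − ε − δ) / Inf_max(g, μ). -/
theorem smoothed_influence_lower_bound
    {𝒳 𝒵 : Type} [Fintype 𝒳] [Fintype 𝒵] [Nonempty 𝒵] [MeasurableSpace 𝒳]
    {n : ℕ} (μ : Measure 𝒳) [IsProbabilityMeasure μ]
    (f g : (Fin n → 𝒳) → 𝒵) (ε δ : ℝ≥0∞) (hε : 0 < ε) (hδ : 0 ≤ δ)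
    (hclose : (Measure.pi fun _ : Fin n => μ) {x | f x ≠ g x} ≤ δ)
    (hInf : 0 < ⨆ i : Fin n, ((Measure.pi fun _ : Fin n => μ).prod μ)
        {p | g p.1 ≠ g (Function.update p.1 i p.2)}) :
    ((sInf {k : ℕ | ∃ T : DTree 𝒳 𝒵 n, T.depth ≤ k ∧
        (Measure.pi fun _ : Fin n => μ) {x | T.eval x ≠ f x} ≤ ε} : ℕ) : ℝ≥0∞)
      ≥ (1 - (⨆ z : 𝒵, (Measure.pi fun _ : Fin n => μ) {x | g x = z}) - ε - δ)
        / ⨆ i : Fin n, ((Measure.pi fun _ : Fin n => μ).prod μ)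
            {p | g p.1 ≠ g (Function.update p.1 i p.2)} := by
  classical
  have hX : Nonempty 𝒳 := by
    rcases isEmpty_or_nonempty 𝒳 with h | h
    · exfalso
      have h1 : (Set.univ : Set 𝒳) = ∅ := Set.univ_eq_empty_iff.2 h
      have h2 := measure_univ (μ := μ)
      rw [h1, measure_empty] at h2
      exact zero_ne_one h2
    · exact h
  set ρ : Measure (Fin n → 𝒳) := Measure.pi fun _ : Fin n => μ with hρdef
  set I : ℝ≥0∞ := ⨆ i : Fin n, (ρ.prod μ) {p | g p.1 ≠ g (Function.update p.1 i p.2)}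
    with hIdef
  set K : Set ℕ := {k : ℕ | ∃ T : DTree 𝒳 𝒵 n, T.depth ≤ k ∧ ρ {x | T.eval x ≠ f x} ≤ ε}
    with hKdef
  have hKne : K.Nonempty := by
    refine ⟨n, allTree f (List.finRange n) (Classical.arbitrary _), ?_, ?_⟩
    · exact (allTree_depth f _ _).trans (by rw [List.length_finRange])
    · have hempty : {x : Fin n → 𝒳 |
          (allTree f (List.finRange n) (Classical.arbitrary _)).eval x ≠ f x} = ∅ := by
        ext x
        simp only [Set.mem_setOf_eq, Set.mem_empty_iff_false, iff_false, not_not]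
        rw [allTree_eval]
        have hfun : (fun j => if j ∈ List.finRange n then x j
            else (Classical.arbitrary (Fin n → 𝒳)) j) = x :=
          funext fun j => by simp [List.mem_finRange]
        rw [hfun]
      rw [hempty, measure_empty]
      exact zero_le
  obtain ⟨T, hTd, hTerr⟩ := Nat.sInf_mem hKne
  rw [ge_iff_le]
  refine ENNReal.div_le_of_le_mul ?_
  rw [tsub_le_iff_right, tsub_le_iff_right, tsub_le_iff_right]
  set S : DTree 𝒳 𝒵 n := (T.prune (fun _ => none)).bar with hSdef
  have hS_eval : ∀ x, S.eval x = T.eval (Rmap x) := by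
    intro x
    rw [hSdef, DTree.bar_eval, DTree.prune_eval]
    intro j a h
    cases h
  have hS_bar : S.IsBar := DTree.bar_isBar _
  have hS_av : S.Avoid ∅ := by
    refine DTree.bar_avoid ?_
    have h := DTree.prune_avoid T (fun _ => none)
    have hset : {j : Fin n | (fun _ : Fin n => (none : Option 𝒳)) j ≠ none}
        = (∅ : Set (Fin n)) := by
      ext j; simp
    rwa [hset] at h
  have hS_depth : S.depth ≤ sInf K :=
    (DTree.bar_depth _).trans ((DTree.prune_depth _ _).trans hTd)
  set g' : (Fin n → 𝒳) → 𝒵 := fun x => g (Rmap x) with hg'def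
  have hg'meas : ∀ z : 𝒵, MeasurableSet {x : Fin n → 𝒳 | g' x = z} := fun z =>
    measurableSet_Rmap_preimage {y : Fin n → 𝒳 | g y = z}
  have hmain := main_bound μ g' hg'meas S hS_bar ∅ hS_av
  have hsup : (⨆ z : 𝒵, ρ {x | g' x = z}) ≤ ⨆ z : 𝒵, ρ {x | g x = z} :=
    iSup_mono fun z => measure_preimage_le ρ Rmap Rmap_fixed {x | g x = z}
  have hI' : (⨆ j : Fin n, (ρ.prod μ) {p | g' p.1 ≠ g' (Function.update p.1 j p.2)}) ≤ I := by
    refine iSup_mono fun j => ?_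
    have hset : {p : (Fin n → 𝒳) × 𝒳 | g' p.1 ≠ g' (Function.update p.1 j p.2)}
        = (fun p : (Fin n → 𝒳) × 𝒳 => (Rmap p.1, rep p.2)) ⁻¹'
          {p : (Fin n → 𝒳) × 𝒳 | g p.1 ≠ g (Function.update p.1 j p.2)} := by
      ext ⟨x, b⟩
      have hcomm : Rmap (Function.update x j b) = Function.update (Rmap x) j (rep b) := by
        funext k
        by_cases hk : k = j
        · subst hk; simp [Rmap, Function.update_self]
        · simp [Rmap, Function.update_of_ne hk]
      show (g' x ≠ g' (Function.update x j b)) ↔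
        (g (Rmap x) ≠ g (Function.update (Rmap x) j (rep b)))
      rw [hg'def]
      show (g (Rmap x) ≠ g (Rmap (Function.update x j b))) ↔ _
      rw [hcomm]
    rw [hset]
    exact measure_preimage_le _ _ prodRep_fixed _
  have hA2 : ρ {x | g' x ≠ f (Rmap x)} ≤ δ := by
    have hset : {x : Fin n → 𝒳 | g' x ≠ f (Rmap x)} = Rmap ⁻¹' {y | f y ≠ g y} := by
      ext x
      exact ne_comm
    rw [hset]
    exact (measure_preimage_le ρ Rmap Rmap_fixed _).trans hclose
  have hA3 : ρ {x | f (Rmap x) ≠ S.eval x} ≤ ε := by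
    have hset : {x : Fin n → 𝒳 | f (Rmap x) ≠ S.eval x}
        = Rmap ⁻¹' {y | T.eval y ≠ f y} := by
      ext x
      simp only [Set.mem_setOf_eq, Set.mem_preimage]
      rw [hS_eval x]
      exact ne_comm
    rw [hset]
    exact (measure_preimage_le ρ Rmap Rmap_fixed _).trans hTerr
  have hunion : (Set.univ : Set (Fin n → 𝒳)) ⊆ {x | g' x = S.eval x}
      ∪ ({x | g' x ≠ f (Rmap x)} ∪ {x | f (Rmap x) ≠ S.eval x}) := by
    intro x _
    by_cases h1 : g' x = S.eval x
    · exact Or.inl h1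
    · right
      by_cases h2 : g' x = f (Rmap x)
      · exact Or.inr fun hc => h1 (h2.trans hc)
      · exact Or.inl h2
  have hchain : (1 : ℝ≥0∞) ≤ ((⨆ z : 𝒵, ρ {x | g x = z}) + ((sInf K : ℕ) : ℝ≥0∞) * I)
      + (δ + ε) := by
    calc (1 : ℝ≥0∞) = ρ Set.univ := measure_univ.symm
      _ ≤ ρ ({x | g' x = S.eval x}
          ∪ ({x | g' x ≠ f (Rmap x)} ∪ {x | f (Rmap x) ≠ S.eval x})) :=
        measure_mono hunion
      _ ≤ ρ {x | g' x = S.eval x}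
          + ρ ({x | g' x ≠ f (Rmap x)} ∪ {x | f (Rmap x) ≠ S.eval x}) :=
        measure_union_le _ _
      _ ≤ ρ {x | g' x = S.eval x}
          + (ρ {x | g' x ≠ f (Rmap x)} + ρ {x | f (Rmap x) ≠ S.eval x}) :=
        add_le_add_right (measure_union_le _ _) _
      _ ≤ ((⨆ z : 𝒵, ρ {x | g x = z}) + ((sInf K : ℕ) : ℝ≥0∞) * I) + (δ + ε) := by
        refine add_le_add (hmain.trans ?_) (add_le_add hA2 hA3)
        exact add_le_add hsup (mul_le_mul' (Nat.cast_le.2 hS_depth) hI')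
  refine hchain.trans (le_of_eq ?_)
  ring
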